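/- For every even n ≥ 4, the cycle C_n satisfies sn(C_n) = 1. -/

import Mathlib

open SimpleGraph

/-- `C₀` is a Sudoku coloring of `G` on the vertex set `S`, with colors in `Fin k`:
there is exactly one proper `k`-coloring of `G` that restricts to `C₀` on `S`.
(Note that such a `C₀` is automatically a proper coloring of the induced subgraph `G[S]`.) -/
def IsSudokuColoring {V : Type*} (G : SimpleGraph V) (k : ℕ) (S : Set V)
    (C₀ : V → Fin k) : Prop :=
  ∃! c : G.Coloring (Fin k), ∀ v ∈ S, c v = C₀ v

/-- The Sudoku number of a finite graph `G`: the minimum cardinality of a set `S` of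
vertices carrying a Sudoku coloring of `G` (with `k = χ(G)` colors). -/
noncomputable def sudokuNumber {V : Type*} [Fintype V] (G : SimpleGraph V) : ℕ :=
  sInf {n | ∃ (S : Finset V) (C₀ : V → Fin G.chromaticNumber.toNat),
    IsSudokuColoring G G.chromaticNumber.toNat S C₀ ∧ S.card = n}

/-!
In a connected graph the colors of a 2-coloring alternate along every walk, so the coloring
is determined by its color at a single vertex. On the other hand the empty set never carries
a Sudoku coloring, since swapping two colors of a coloring yields a different one. An even
cycle is connected with chromatic number 2.
-/

namespace SimpleGraph

variable {V : Type*} {G : SimpleGraph V}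

theorem Coloring.apply_eq_of_walk {c c' : G.Coloring (Fin 2)} {u v : V} (p : G.Walk u v)
    (hu : c u = c' u) : c v = c' v := by
  induction p with
  | nil => exact hu
  | cons hadj _ ih =>
    have h := c.valid hadj
    have h' := c'.valid hadj
    exact ih (by omega)

theorem Coloring.eq_of_preconnected {c c' : G.Coloring (Fin 2)} (hG : G.Preconnected) {u : V}
    (hu : c u = c' u) : c = c' :=
  RelHom.ext fun v => (hG u v).elim fun p => Coloring.apply_eq_of_walk p hu

theorem isSudokuColoring_singleton_of_preconnected (hG : G.Preconnected)
    (c : G.Coloring (Fin 2)) (u : V) : IsSudokuColoring G 2 {u} c :=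
  ⟨c, fun _ _ => rfl, fun _ hc' => Coloring.eq_of_preconnected hG (hc' u rfl)⟩

theorem not_isSudokuColoring_empty [Nonempty V] {k : ℕ} (hk : 2 ≤ k) (C₀ : V → Fin k) :
    ¬ IsSudokuColoring G k ∅ C₀ := by
  rintro ⟨c, -, huniq⟩
  have : Nontrivial (Fin k) := Fin.nontrivial_iff_two_le.mpr hk
  obtain ⟨v⟩ := ‹Nonempty V›
  obtain ⟨x, hx⟩ := exists_ne (c v)
  have hv : Equiv.swap (c v) x (c v) = c v :=
    congrArg (· v) (huniq (recolorOfEquiv G (Equiv.swap (c v) x) c) (by simp))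
  exact hx (by simpa using hv)

theorem sudokuNumber_eq_one_of_preconnected [Fintype V] (hG : G.Preconnected)
    (hχ : G.chromaticNumber = 2) : sudokuNumber G = 1 := by
  have : Nonempty V := by
    rw [← not_isEmpty_iff, ← chromaticNumber_eq_zero_iff, hχ]
    exact two_ne_zero
  have hk : G.chromaticNumber.toNat = 2 := by rw [hχ]; rfl
  obtain ⟨c⟩ : G.Colorable 2 := chromaticNumber_le_iff_colorable.mp hχ.le
  rw [sudokuNumber, hk]
  have hone : ∃ (S : Finset V) (C₀ : V → Fin 2), IsSudokuColoring G 2 S C₀ ∧ S.card = 1 :=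
    ⟨{Classical.arbitrary V}, c,
      by simpa using isSudokuColoring_singleton_of_preconnected hG c _, Finset.card_singleton _⟩
  refine le_antisymm (Nat.sInf_le hone) (le_csInf ⟨1, hone⟩ ?_)
  rintro m ⟨S, C₀, hS, rfl⟩
  refine Finset.card_pos.mpr (Finset.nonempty_iff_ne_empty.mpr ?_)
  rintro rfl
  exact not_isSudokuColoring_empty le_rfl C₀ (by simpa using hS)

end SimpleGraph

/-- For every even `n ≥ 4`, the cycle `C_n` has Sudoku number 1. -/
theorem sudokuNumber_cycle_even (n : ℕ) (hn : 4 ≤ n) (he : Even n) :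
    sudokuNumber (SimpleGraph.cycleGraph n) = 1 :=
  sudokuNumber_eq_one_of_preconnected cycleGraph_preconnected
    (chromaticNumber_cycleGraph_of_even n (by omega) he)
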